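/- Let (X,d) be a metric space and T : X → X a map (not assumed continuous, and X not assumed complete). Suppose there exist functions φₙ : X × X → [0,∞) with d(Tⁿx, Tⁿy) ≤ φₙ(x,y) for all x,y ∈ X and n ∈ ℕ, such that φₙ converges pointwise to φ : X × X → [0,∞) uniformly on B × B for every bounded subset B ⊂ X; and suppose there is ψ : [0,∞) → [0,∞), nondecreasing, right upper semicontinuous, with ψ(t) < t for all t > 0, such that φ(x,y) ≤ ψ(M(x,y)) for all x,y, where M(x,y) = max{d(x,y), d(Tx,x), d(Ty,y), d(Ty,x), d(Tx,y)}. If x₀ ∈ X has bounded orbit, then the sequence xₙ = Tⁿx₀ is a Cauchy sequence. -/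

import Mathlib

open Set Filter Function Topology

/-!
Let `D m` be the diameter of the tail `{xₙ : n ≥ m}` of the orbit. Every term of `M(xᵢ, xⱼ)` with
`i, j ≥ m` is a distance between points of that tail, and `x_{N+i} = T^N xᵢ`, so uniform convergence
of `φₙ` on the bounded orbit gives `D (N + m) ≤ ψ (D m) + ε` once `N` is large. The nonincreasing
sequence `D` tends to `δ = inf D` from above; right upper semicontinuity turns the inequality into
`δ ≤ ψ δ`, which forces `δ = 0`.
-/

section RightUpperSemicontinuous

variable {α : Type*} [LinearOrder α] [TopologicalSpace α] {ψ : α → ℝ} {t₀ : α}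

lemma MonotoneOn.isBoundedUnder_le_nhdsGT [OrderTopology α] [NoMaxOrder α]
    (hψ : MonotoneOn ψ (Ici t₀)) : IsBoundedUnder (· ≤ ·) (𝓝[>] t₀) ψ := by
  obtain ⟨u, hu⟩ := exists_gt t₀
  refine ⟨ψ u, eventually_map.2 ?_⟩
  filter_upwards [Ioc_mem_nhdsGT hu] with t ht
  exact hψ (mem_Ici.2 ht.1.le) (mem_Ici.2 hu.le) ht.2

lemma eventually_nhdsGE_lt_add_of_limsup_nhdsGT_le (hbdd : IsBoundedUnder (· ≤ ·) (𝓝[>] t₀) ψ)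
    (husc : limsup ψ (𝓝[>] t₀) ≤ ψ t₀) {ε : ℝ} (hε : 0 < ε) :
    ∀ᶠ t in 𝓝[≥] t₀, ψ t < ψ t₀ + ε := by
  rw [← Ioi_insert, nhdsWithin_insert, eventually_sup, eventually_pure]
  exact ⟨by linarith, eventually_lt_of_limsup_lt (by linarith) hbdd⟩

end RightUpperSemicontinuous

lemma tendsto_atTop_zero_of_le_comp_add {D : ℕ → ℝ} {ψ : ℝ → ℝ} (hD : Antitone D)
    (hD0 : ∀ m, 0 ≤ D m) (hψ : MonotoneOn ψ (Ici 0))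
    (hψ_usc : ∀ t₀, 0 ≤ t₀ → limsup ψ (𝓝[>] t₀) ≤ ψ t₀) (hψ_lt : ∀ t, 0 < t → ψ t < t)
    (hDψ : ∀ ε > 0, ∃ N, ∀ m, D (N + m) ≤ ψ (D m) + ε) :
    Tendsto D atTop (𝓝 0) := by
  have hbdd : BddBelow (range D) := ⟨0, forall_mem_range.2 hD0⟩
  set δ := ⨅ m, D m
  have hδ0 : 0 ≤ δ := le_ciInf hD0
  have hδD : ∀ m, δ ≤ D m := ciInf_le hbdd
  have hDδ : Tendsto D atTop (𝓝[≥] δ) :=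
    tendsto_nhdsWithin_of_tendsto_nhds_of_eventually_within D (tendsto_atTop_ciInf hD hbdd)
      (.of_forall hδD)
  have hδψ : δ ≤ ψ δ := by
    refine le_of_forall_pos_lt_add fun ε hε => ?_
    -- Monotonicity bounds `ψ` to the right of `δ`; otherwise `limsup` in `ℝ` is a junk value.
    have hψD := eventually_nhdsGE_lt_add_of_limsup_nhdsGT_le
      (hψ.mono (Ici_subset_Ici.2 hδ0)).isBoundedUnder_le_nhdsGT (hψ_usc δ hδ0) (half_pos hε)
    obtain ⟨m, hm⟩ := (hDδ.eventually hψD).exists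
    obtain ⟨N, hN⟩ := hDψ _ (half_pos hε)
    linarith [hδD (N + m), hN m]
  have hδ : δ = 0 := by
    by_contra h
    exact (hψ_lt δ (lt_of_le_of_ne hδ0 (Ne.symm h))).not_ge hδψ
  exact hδ ▸ tendsto_atTop_ciInf hD hbdd

section TailDiam

variable {X : Type*} [PseudoMetricSpace X] {f : ℕ → X}

noncomputable def tailDiam (f : ℕ → X) (m : ℕ) : ℝ := Metric.diam (f '' Ici m)

lemma tailDiam_nonneg (f : ℕ → X) (m : ℕ) : 0 ≤ tailDiam f m := Metric.diam_nonneg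

lemma dist_le_tailDiam (hf : Bornology.IsBounded (range f)) {m i j : ℕ} (hi : m ≤ i)
    (hj : m ≤ j) : dist (f i) (f j) ≤ tailDiam f m :=
  Metric.dist_le_diam_of_mem (hf.subset (image_subset_range _ _)) (mem_image_of_mem f hi)
    (mem_image_of_mem f hj)

lemma tailDiam_le_of_forall_dist_le {m : ℕ} {C : ℝ}
    (h : ∀ i j, m ≤ i → m ≤ j → dist (f i) (f j) ≤ C) : tailDiam f m ≤ C :=
  Metric.diam_le_of_forall_dist_le_of_nonempty (nonempty_Ici.image f) <| by
    rintro _ ⟨i, hi, rfl⟩ _ ⟨j, hj, rfl⟩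
    exact h i j hi hj

lemma antitone_tailDiam (hf : Bornology.IsBounded (range f)) : Antitone (tailDiam f) :=
  fun _ _ hab => Metric.diam_mono (image_mono (Ici_subset_Ici.2 hab))
    (hf.subset (image_subset_range _ _))

lemma cauchySeq_of_tendsto_tailDiam (hf : Bornology.IsBounded (range f))
    (h : Tendsto (tailDiam f) atTop (𝓝 0)) : CauchySeq f :=
  cauchySeq_of_le_tendsto_0 _ (fun _ _ _ => dist_le_tailDiam hf) h

end TailDiam

section Orbit

variable {X : Type*} [PseudoMetricSpace X] {T : X → X} {x₀ : X}

/-- The quantity `M(x, y)` of the contraction condition. -/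
def maxDist (T : X → X) (x y : X) : ℝ :=
  max (dist x y) (max (dist (T x) x) (max (dist (T y) y) (max (dist (T y) x) (dist (T x) y))))

lemma maxDist_nonneg (T : X → X) (x y : X) : 0 ≤ maxDist T x y :=
  dist_nonneg.trans (le_max_left _ _)

lemma maxDist_iterate_le_tailDiam (hx₀ : Bornology.IsBounded (range fun n => T^[n] x₀))
    {m i j : ℕ} (hi : m ≤ i) (hj : m ≤ j) :
    maxDist T (T^[i] x₀) (T^[j] x₀) ≤ tailDiam (fun n => T^[n] x₀) m := by
  have h (a b : ℕ) (ha : m ≤ a) (hb : m ≤ b) := dist_le_tailDiam hx₀ ha hb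
  simp only [maxDist, ← iterate_succ_apply' T]
  exact max_le (h i j hi hj) <| max_le (h _ i (by omega) hi) <| max_le (h _ j (by omega) hj) <|
    max_le (h _ i (by omega) hi) (h _ j (by omega) hj)

lemma tailDiam_orbit_add_le {ψ : ℝ → ℝ} (hx₀ : Bornology.IsBounded (range fun n => T^[n] x₀))
    (hψ : MonotoneOn ψ (Ici 0))
    (hT : ∀ ε > 0, ∃ N, ∀ x ∈ range (fun n => T^[n] x₀), ∀ y ∈ range (fun n => T^[n] x₀),
      dist (T^[N] x) (T^[N] y) ≤ ψ (maxDist T x y) + ε) :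
    ∀ ε > 0, ∃ N, ∀ m,
      tailDiam (fun n => T^[n] x₀) (N + m) ≤ ψ (tailDiam (fun n => T^[n] x₀) m) + ε := by
  intro ε hε
  obtain ⟨N, hN⟩ := hT ε hε
  refine ⟨N, fun m => tailDiam_le_of_forall_dist_le fun i j hi hj => ?_⟩
  obtain ⟨a, rfl⟩ := Nat.exists_eq_add_of_le (le_of_add_le_left hi)
  obtain ⟨b, rfl⟩ := Nat.exists_eq_add_of_le (le_of_add_le_left hj)
  have hM := maxDist_iterate_le_tailDiam (T := T) hx₀ (m := m) (i := a) (j := b) (by omega) (by omega)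
  calc dist (T^[N + a] x₀) (T^[N + b] x₀)
      = dist (T^[N] (T^[a] x₀)) (T^[N] (T^[b] x₀)) := by simp only [iterate_add_apply]
    _ ≤ ψ (maxDist T (T^[a] x₀) (T^[b] x₀)) + ε := hN _ ⟨a, rfl⟩ _ ⟨b, rfl⟩
    _ ≤ ψ (tailDiam (fun n => T^[n] x₀) m) + ε :=
      add_le_add_left (hψ (maxDist_nonneg _ _ _) (tailDiam_nonneg _ _) hM) ε

end Orbit

theorem stmt_9_general {X : Type*} [MetricSpace X]
    (T : X → X)
    (φ : ℕ → X → X → ℝ) (φlim : X → X → ℝ)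
    (hd : ∀ n x y, dist (T^[n] x) (T^[n] y) ≤ φ n x y)
    (hunif : ∀ B : Set X, Bornology.IsBounded B → ∀ ε > 0, ∃ N, ∀ n ≥ N,
      ∀ x ∈ B, ∀ y ∈ B, |φ n x y - φlim x y| ≤ ε)
    (ψ : ℝ → ℝ)
    (hψ_mono : ∀ s t, 0 ≤ s → s ≤ t → ψ s ≤ ψ t)
    (hψ_usc : ∀ t₀, 0 ≤ t₀ → limsup ψ (nhdsWithin t₀ (Ioi t₀)) ≤ ψ t₀)
    (hψ_lt : ∀ t, 0 < t → ψ t < t)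
    (hφψ : ∀ x y, φlim x y ≤ ψ (max (dist x y) (max (dist (T x) x)
      (max (dist (T y) y) (max (dist (T y) x) (dist (T x) y))))))
    (x₀ : X) (hx₀ : Bornology.IsBounded (Set.range fun n => T^[n] x₀)) :
    CauchySeq (fun n => T^[n] x₀) := by
  have hψ : MonotoneOn ψ (Ici 0) := fun s hs t _ hst => hψ_mono s t hs hst
  have hT : ∀ ε > 0, ∃ N, ∀ x ∈ range (fun n => T^[n] x₀), ∀ y ∈ range (fun n => T^[n] x₀),
      dist (T^[N] x) (T^[N] y) ≤ ψ (maxDist T x y) + ε := by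
    intro ε hε
    obtain ⟨N, hN⟩ := hunif _ hx₀ ε hε
    refine ⟨N, fun x hx y hy => ?_⟩
    have hφ : φlim x y ≤ ψ (maxDist T x y) := hφψ x y
    linarith [hd N x y, (abs_le.1 (hN N le_rfl x hx y hy)).2]
  exact cauchySeq_of_tendsto_tailDiam hx₀ <|
    tendsto_atTop_zero_of_le_comp_add (antitone_tailDiam hx₀) (tailDiam_nonneg _) hψ hψ_usc
      hψ_lt (tailDiam_orbit_add_le hx₀ hψ hT)

/-- for an asymptotic pointwise contraction on an arbitrary metric
space (no completeness, no continuity), the orbit sequence of any point with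
bounded orbit is Cauchy. -/
theorem stmt_9 {X : Type*} [MetricSpace X]
    (T : X → X)
    (φ : ℕ → X → X → ℝ) (φlim : X → X → ℝ)
    (hφ_nonneg : ∀ n x y, 0 ≤ φ n x y)
    (hφlim_nonneg : ∀ x y, 0 ≤ φlim x y)
    (hd : ∀ n x y, dist (T^[n] x) (T^[n] y) ≤ φ n x y)
    (hconv : ∀ x y, Tendsto (fun n => φ n x y) atTop (nhds (φlim x y)))
    (hunif : ∀ B : Set X, Bornology.IsBounded B → ∀ ε > 0, ∃ N, ∀ n ≥ N,
      ∀ x ∈ B, ∀ y ∈ B, |φ n x y - φlim x y| ≤ ε)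
    (ψ : ℝ → ℝ)
    (hψ_nonneg : ∀ t, 0 ≤ t → 0 ≤ ψ t)
    (hψ_mono : ∀ s t, 0 ≤ s → s ≤ t → ψ s ≤ ψ t)
    (hψ_usc : ∀ t₀, 0 ≤ t₀ → limsup ψ (nhdsWithin t₀ (Ioi t₀)) ≤ ψ t₀)
    (hψ_lt : ∀ t, 0 < t → ψ t < t)
    (hφψ : ∀ x y, φlim x y ≤ ψ (max (dist x y) (max (dist (T x) x)
      (max (dist (T y) y) (max (dist (T y) x) (dist (T x) y))))))
    (x₀ : X) (hx₀ : Bornology.IsBounded (Set.range fun n => T^[n] x₀)) :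
    CauchySeq (fun n => T^[n] x₀) :=
  stmt_9_general T φ φlim hd hunif ψ hψ_mono hψ_usc hψ_lt hφψ x₀ hx₀
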